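/- Let A be a nonnegative weakly irreducible tensor of order k and dimension n. Then the spectral radius ρ(A) is an eigenvalue of A with a strictly positive eigenvector, unique up to positive scaling. -/

import Mathlib

attribute [local instance] Classical.propDecidable

/-- `lam` is an eigenvalue of the order-`k`, dimension-`n` tensor `A`:
there is a nonzero `x` with `Σ a_{i i_2 … i_k} x_{i_2} ⋯ x_{i_k} = lam·x_i^{k-1}`. -/
def IsTensorEigenvalue (n k : ℕ) (A : Fin n → (Fin (k - 1) → Fin n) → ℂ)
    (lam : ℂ) : Prop :=
  ∃ x : Fin n → ℂ, x ≠ 0 ∧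
    ∀ i, (∑ p : Fin (k - 1) → Fin n, A i p * ∏ m, x (p m)) = lam * x i ^ (k - 1)

/-- The spectral radius of a tensor: the largest modulus of its eigenvalues. -/
noncomputable def specRad (n k : ℕ) (A : Fin n → (Fin (k - 1) → Fin n) → ℂ) : ℝ :=
  sSup {r : ℝ | ∃ lam : ℂ, IsTensorEigenvalue n k A lam ∧ ‖lam‖ = r}

/-- The adjacency tensor of a `k`-uniform hypergraph: entry `1/(k-1)!` whenever the
index tuple forms an edge, and `0` otherwise. -/
noncomputable def adjT (n k : ℕ) (E : Finset (Finset (Fin n))) :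
    Fin n → (Fin (k - 1) → Fin n) → ℂ := fun i p =>
  if insert i (Finset.image p Finset.univ) ∈ E then
    (1 : ℂ) / (Nat.factorial (k - 1)) else 0

/-!
For a positive tensor, a maximizer of the Collatz–Wielandt value `t` subject to
`t • x ^ m ≤ A x ^ m` over the simplex is a positive eigenpair: were one inequality strict,
raising that coordinate would make all of them strict. A weakly irreducible `A` is the limit of
the positive tensors `A + ε`; their eigenvectors, scaled to have least entry `1`, are bounded
uniformly in `ε` because a bound propagates along the edges `i → p l` (`0 < A i p`), which reach
every index. A limit point is then a positive eigenpair `(μ, x)` of `A`. If `z` is a complex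
eigenvector for `λ`, then `|z|` is a subeigenvector for `‖λ‖`, and comparing it with the multiple
of `x` that touches it from above gives `‖λ‖ ≤ μ`, so `μ` is the spectral radius. Comparing from
below instead, weak irreducibility forces two positive eigenvectors to be proportional.
-/

open Finset Filter Topology

section Tensor

variable {ι : Type*} [Fintype ι] {m : ℕ}

/-- `tensorMap A x` is `A x^m`; an order-`k` tensor has `m = k - 1`. -/
def tensorMap (A : ι → (Fin m → ι) → ℝ) (x : ι → ℝ) (i : ι) : ℝ :=
  ∑ p : Fin m → ι, A i p * ∏ l, x (p l)

def IsSubeigenpair (A : ι → (Fin m → ι) → ℝ) (t : ℝ) (x : ι → ℝ) : Prop :=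
  ∀ i, t * x i ^ m ≤ tensorMap A x i

def IsEigenpair (A : ι → (Fin m → ι) → ℝ) (μ : ℝ) (x : ι → ℝ) : Prop :=
  ∀ i, tensorMap A x i = μ * x i ^ m

def WeaklyIrreducible (A : ι → (Fin m → ι) → ℝ) : Prop :=
  ∀ I : Finset ι, I.Nonempty → I ≠ univ →
    ∃ i ∈ I, ∃ p : Fin m → ι, 0 < A i p ∧ ∃ l, p l ∉ I

variable {A : ι → (Fin m → ι) → ℝ} {x y : ι → ℝ} {t μ ν : ℝ}

lemma tensorMap_nonneg (hA : ∀ i p, 0 ≤ A i p) (hx : ∀ j, 0 ≤ x j) (i : ι) :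
    0 ≤ tensorMap A x i :=
  sum_nonneg fun p _ => mul_nonneg (hA i p) (prod_nonneg fun _ _ => hx _)

lemma mul_prod_le_tensorMap (hA : ∀ i p, 0 ≤ A i p) (hx : ∀ j, 0 ≤ x j) (i : ι)
    (p : Fin m → ι) : A i p * ∏ l, x (p l) ≤ tensorMap A x i :=
  single_le_sum (f := fun p => A i p * ∏ l, x (p l))
    (fun p _ => mul_nonneg (hA i p) (prod_nonneg fun _ _ => hx _)) (mem_univ p)

lemma tensorMap_mono (hA : ∀ i p, 0 ≤ A i p) (hx : ∀ j, 0 ≤ x j) (hxy : x ≤ y) (i : ι) :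
    tensorMap A x i ≤ tensorMap A y i :=
  sum_le_sum fun p _ => mul_le_mul_of_nonneg_left
    (prod_le_prod (fun _ _ => hx _) fun _ _ => hxy _) (hA i p)

lemma tensorMap_lt_tensorMap (hA : ∀ i p, 0 ≤ A i p) (hx : ∀ j, 0 ≤ x j) (hxy : x ≤ y)
    {i : ι} {p : Fin m → ι} (hp : 0 < A i p) (hlt : ∏ l, x (p l) < ∏ l, y (p l)) :
    tensorMap A x i < tensorMap A y i :=
  sum_lt_sum (fun q _ => mul_le_mul_of_nonneg_left
    (prod_le_prod (fun _ _ => hx _) fun _ _ => hxy _) (hA i q))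
    ⟨p, mem_univ p, mul_lt_mul_of_pos_left hlt hp⟩

lemma tensorMap_smul (c : ℝ) (x : ι → ℝ) (i : ι) :
    tensorMap A (c • x) i = c ^ m * tensorMap A x i := by
  simp only [tensorMap, Pi.smul_apply, smul_eq_mul, prod_mul_distrib, prod_const, card_univ,
    Fintype.card_fin, mul_sum]
  exact sum_congr rfl fun p _ => by ring

lemma tensorMap_le_sum_mul_pow (hA : ∀ i p, 0 ≤ A i p) (hx : ∀ j, 0 ≤ x j) {i : ι}
    (hi : ∀ j, x j ≤ x i) : tensorMap A x i ≤ (∑ p, A i p) * x i ^ m := by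
  rw [sum_mul]
  refine sum_le_sum fun p _ => mul_le_mul_of_nonneg_left ?_ (hA i p)
  simpa using prod_le_prod (s := univ) (fun l _ => hx (p l)) fun l _ => hi (p l)

@[fun_prop]
lemma Continuous.tensorMap {X : Type*} [TopologicalSpace X] {f : X → ι → (Fin m → ι) → ℝ}
    {g : X → ι → ℝ} (hf : Continuous f) (hg : Continuous g) (i : ι) :
    Continuous fun q => tensorMap (f q) (g q) i := by
  unfold _root_.tensorMap
  fun_prop

lemma IsEigenpair.isSubeigenpair (h : IsEigenpair A μ x) : IsSubeigenpair A μ x :=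
  fun i => (h i).ge

lemma IsSubeigenpair.smul (h : IsSubeigenpair A t x) {c : ℝ} (hc : 0 ≤ c) :
    IsSubeigenpair A t (c • x) := fun i => by
  rw [tensorMap_smul, Pi.smul_apply, smul_eq_mul, mul_pow, mul_left_comm]
  exact mul_le_mul_of_nonneg_left (h i) (pow_nonneg hc m)

lemma IsEigenpair.smul (h : IsEigenpair A μ x) (c : ℝ) : IsEigenpair A μ (c • x) := fun i => by
  rw [tensorMap_smul, h i, Pi.smul_apply, smul_eq_mul, mul_pow]
  ring

lemma IsSubeigenpair.le_sum (hA : ∀ i p, 0 ≤ A i p) (hx : ∀ j, 0 ≤ x j) (hx0 : x ≠ 0)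
    (h : IsSubeigenpair A t x) : t ≤ ∑ i, ∑ p, A i p := by
  obtain ⟨j, hj⟩ := Function.ne_iff.1 hx0
  obtain ⟨i, -, hi⟩ := exists_max_image univ x ⟨j, mem_univ j⟩
  have hxi : 0 < x i ^ m := pow_pos (((hx j).lt_of_ne' hj).trans_le (hi j (mem_univ j))) m
  calc t ≤ ∑ p, A i p := le_of_mul_le_mul_right
        ((h i).trans (tensorMap_le_sum_mul_pow hA hx fun j => hi j (mem_univ j))) hxi
    _ ≤ ∑ i, ∑ p, A i p :=
        single_le_sum (f := fun i => ∑ p, A i p)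
          (fun i _ => sum_nonneg fun p _ => hA i p) (mem_univ i)

lemma IsEigenpair.nonneg [Nonempty ι] (hA : ∀ i p, 0 ≤ A i p) (hx : ∀ i, 0 < x i)
    (h : IsEigenpair A μ x) : 0 ≤ μ := by
  obtain ⟨i⟩ := ‹Nonempty ι›
  have := tensorMap_nonneg hA (fun j => (hx j).le) i
  rw [h i] at this
  exact nonneg_of_mul_nonneg_left this (pow_pos (hx i) m)

/-- Collatz–Wielandt: compare `y` with `c • x`, where `c` is the largest ratio `y i / x i`,
at an index attaining it. -/
lemma IsSubeigenpair.le_of_isEigenpair (hA : ∀ i p, 0 ≤ A i p) (hx : ∀ i, 0 < x i)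
    (hμ : IsEigenpair A μ x) (hy : ∀ i, 0 ≤ y i) (hy0 : y ≠ 0) (hν : IsSubeigenpair A ν y) :
    ν ≤ μ := by
  obtain ⟨j, hj⟩ := Function.ne_iff.1 hy0
  obtain ⟨i, -, hi⟩ := exists_max_image univ (fun i => y i / x i) ⟨j, mem_univ j⟩
  set c := y i / x i
  have hyc : y ≤ c • x := fun j => by
    simpa only [Pi.smul_apply, smul_eq_mul, ← div_le_iff₀ (hx j)] using hi j (mem_univ j)
  have hyi : y i = c * x i := (div_mul_cancel₀ _ (hx i).ne').symm
  have hc : 0 < c := (div_pos ((hy j).lt_of_ne' hj) (hx j)).trans_le (hi j (mem_univ j))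
  have hyi_pos : 0 < y i ^ m := pow_pos (hyi ▸ mul_pos hc (hx i)) m
  refine le_of_mul_le_mul_right ?_ hyi_pos
  calc ν * y i ^ m ≤ tensorMap A y i := hν i
    _ ≤ tensorMap A (c • x) i := tensorMap_mono hA hy hyc i
    _ = μ * y i ^ m := by rw [(hμ.smul c) i, Pi.smul_apply, smul_eq_mul, hyi]

lemma IsEigenpair.eigenvalue_eq [Nonempty ι] (hA : ∀ i p, 0 ≤ A i p) (hx : ∀ i, 0 < x i)
    (hμ : IsEigenpair A μ x) (hy : ∀ i, 0 < y i) (hν : IsEigenpair A ν y) : ν = μ := by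
  have ne_zero : ∀ z : ι → ℝ, (∀ i, 0 < z i) → z ≠ 0 := fun z hz h => by
    obtain ⟨i⟩ := ‹Nonempty ι›
    exact (hz i).ne' (congr_fun h i)
  exact le_antisymm
    (hν.isSubeigenpair.le_of_isEigenpair hA hx hμ (fun i => (hy i).le) (ne_zero y hy))
    (hμ.isSubeigenpair.le_of_isEigenpair hA hy hν (fun i => (hx i).le) (ne_zero x hx))

/-- On the set where `y i / x i` attains its minimum `c`, weak irreducibility yields an index at
which `tensorMap A (c • x) < tensorMap A y`, although both sides equal `μ * y i ^ m` there. -/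
lemma IsEigenpair.eq_smul [Nonempty ι] (hA : ∀ i p, 0 ≤ A i p) (hwi : WeaklyIrreducible A)
    (hx : ∀ i, 0 < x i) (hμx : IsEigenpair A μ x) (hy : ∀ i, 0 < y i)
    (hμy : IsEigenpair A μ y) : ∃ c : ℝ, 0 < c ∧ y = c • x := by
  obtain ⟨i₀, -, hi₀⟩ := exists_min_image univ (fun i => y i / x i) univ_nonempty
  set c := y i₀ / x i₀
  have hc : 0 < c := div_pos (hy i₀) (hx i₀)
  have hcx : c • x ≤ y := fun j => by
    simpa only [Pi.smul_apply, smul_eq_mul, ← le_div_iff₀ (hx j)] using hi₀ j (mem_univ j)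
  refine ⟨c, hc, ?_⟩
  set J := univ.filter fun i => y i = c * x i
  have hJ : J = univ := by
    by_contra hJ
    obtain ⟨i, hi, p, hp, l, hl⟩ :=
      hwi J ⟨i₀, mem_filter.2 ⟨mem_univ _, (div_mul_cancel₀ _ (hx i₀).ne').symm⟩⟩ hJ
    have hlt : ∏ l, (c • x) (p l) < ∏ l, y (p l) :=
      prod_lt_prod (fun l _ => mul_pos hc (hx _)) (fun l _ => hcx _)
        ⟨l, mem_univ l, (hcx _).lt_of_ne fun h => hl (mem_filter.2 ⟨mem_univ _, h.symm⟩)⟩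
    have := tensorMap_lt_tensorMap (x := c • x) hA (fun j => (mul_pos hc (hx j)).le) hcx hp
      hlt
    rw [hμx.smul c i, hμy i, Pi.smul_apply, smul_eq_mul, (mem_filter.1 hi).2] at this
    exact lt_irrefl _ this
  funext i
  have hi : i ∈ J := hJ ▸ mem_univ i
  exact (mem_filter.1 hi).2

lemma exists_gt_isSubeigenpair (h : ∀ j, μ * x j ^ m < tensorMap A x j) :
    ∃ t > μ, IsSubeigenpair A t x := by
  have hev : ∀ᶠ t in 𝓝 μ, ∀ j, t * x j ^ m < tensorMap A x j :=
    eventually_all.2 fun j => (continuous_mul_const _).continuousAt.eventually_lt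
      continuousAt_const (h j)
  obtain ⟨t, ht, hμt⟩ := (hev.and_frequently (frequently_gt_nhds μ)).exists
  exact ⟨t, hμt, fun j => (ht j).le⟩

/-- Raising the coordinate `i` slightly makes the inequality strict at every index,
since `A` is positive. -/
lemma IsSubeigenpair.exists_gt_of_lt (hm : m ≠ 0) (hA : ∀ i p, 0 < A i p) (hx : ∀ j, 0 ≤ x j)
    (h : IsSubeigenpair A μ x) {i : ι} (hi : μ * x i ^ m < tensorMap A x i) :
    ∃ t > μ, ∃ y : ι → ℝ, (∀ j, 0 ≤ y j) ∧ y ≠ 0 ∧ IsSubeigenpair A t y := by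
  have hA' : ∀ i p, 0 ≤ A i p := fun i p => (hA i p).le
  have hev : ∀ᶠ δ in 𝓝 0, μ * (x i + δ) ^ m < tensorMap A x i :=
    ContinuousAt.eventually_lt (by fun_prop) continuousAt_const (by simpa using hi)
  obtain ⟨δ, hδx, hδ⟩ := (hev.and_frequently (frequently_gt_nhds 0)).exists
  set y := Function.update x i (x i + δ)
  have hyi : y i = x i + δ := Function.update_self ..
  have hxy : x ≤ y := fun j => by
    rcases eq_or_ne j i with rfl | hj
    · simpa [hyi] using hδ.le
    · simp [y, Function.update_of_ne hj]
  have hy : ∀ j, 0 ≤ y j := fun j => (hx j).trans (hxy j)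
  have hyi_pos : 0 < y i := hyi ▸ add_pos_of_nonneg_of_pos (hx i) hδ
  have hstrict : ∀ j, μ * y j ^ m < tensorMap A y j := fun j => by
    rcases eq_or_ne j i with rfl | hj
    · exact hyi ▸ hδx.trans_le (tensorMap_mono hA' hx hxy j)
    · have hlt : ∏ _l : Fin m, x i < ∏ _l : Fin m, y i := by
        simpa using pow_lt_pow_left₀ (hyi ▸ lt_add_of_pos_right _ hδ) (hx i) hm
      rw [show y j = x j from Function.update_of_ne hj _ _]
      exact (h j).trans_lt (tensorMap_lt_tensorMap hA' hx hxy (hA j fun _ => i) hlt)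
  obtain ⟨t, hμt, ht⟩ := exists_gt_isSubeigenpair hstrict
  exact ⟨t, hμt, y, hy, fun h0 => hyi_pos.ne' (congr_fun h0 i), ht⟩

lemma inv_sum_smul_mem_stdSimplex (hx : ∀ j, 0 ≤ x j) (hx0 : x ≠ 0) :
    (∑ j, x j)⁻¹ • x ∈ stdSimplex ℝ ι := by
  obtain ⟨j, hj⟩ := Function.ne_iff.1 hx0
  have hsum : 0 < ∑ j, x j := sum_pos' (fun j _ => hx j) ⟨j, mem_univ j, (hx j).lt_of_ne' hj⟩
  refine ⟨fun j => mul_nonneg (inv_nonneg.2 hsum.le) (hx j), ?_⟩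
  simp only [Pi.smul_apply, smul_eq_mul, ← mul_sum, inv_mul_cancel₀ hsum.ne']

lemma ne_zero_of_mem_stdSimplex (hx : x ∈ stdSimplex ℝ ι) : x ≠ 0 := fun h => by
  simpa [h] using hx.2

def collatzWielandtSet (A : ι → (Fin m → ι) → ℝ) : Set (ℝ × (ι → ℝ)) :=
  {q | 0 ≤ q.1 ∧ q.2 ∈ stdSimplex ℝ ι ∧ IsSubeigenpair A q.1 q.2}

lemma isCompact_collatzWielandtSet (hA : ∀ i p, 0 ≤ A i p) :
    IsCompact (collatzWielandtSet A) := by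
  have hclosed : IsClosed (collatzWielandtSet A) := by
    simp only [collatzWielandtSet, IsSubeigenpair, Set.ofPred_and, Set.ofPred_forall]
    exact (isClosed_le continuous_const continuous_fst).inter
      (((isClosed_stdSimplex ℝ ι).preimage continuous_snd).inter
        (isClosed_iInter fun i => isClosed_le (by fun_prop) (by fun_prop)))
  refine ((isCompact_Icc (a := 0) (b := ∑ i, ∑ p, A i p)).prod
    (isCompact_stdSimplex ℝ ι)).of_isClosed_subset hclosed ?_
  rintro ⟨t, x⟩ ⟨ht, hx, htx⟩
  exact ⟨⟨ht, htx.le_sum hA hx.1 (ne_zero_of_mem_stdSimplex hx)⟩, hx⟩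

lemma exists_pos_isEigenpair_of_pos [Nonempty ι] (hm : m ≠ 0) (hA : ∀ i p, 0 < A i p) :
    ∃ μ x, (∀ i, 0 < x i) ∧ IsEigenpair A μ x := by
  have hA' : ∀ i p, 0 ≤ A i p := fun i p => (hA i p).le
  obtain ⟨i₀⟩ := ‹Nonempty ι›
  have hne : (collatzWielandtSet A).Nonempty :=
    ⟨(0, Pi.single i₀ 1), le_rfl, single_mem_stdSimplex ℝ i₀, fun i => by
      simpa using tensorMap_nonneg hA' (fun j => (single_mem_stdSimplex ℝ i₀).1 j) i⟩
  obtain ⟨⟨μ, x⟩, ⟨hμ, hx, hμx⟩, hmax⟩ :=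
    (isCompact_collatzWielandtSet hA').exists_isMaxOn hne continuous_fst.continuousOn
  dsimp only at hμ hx hμx
  have heig : IsEigenpair A μ x := fun i => by
    refine (hμx i).eq_or_lt.elim Eq.symm fun hlt => ?_
    obtain ⟨t, hμt, y, hy, hy0, hty⟩ := hμx.exists_gt_of_lt hm hA hx.1 hlt
    have : t ≤ μ := isMaxOn_iff.1 hmax (t, _) ⟨hμ.trans hμt.le,
      inv_sum_smul_mem_stdSimplex hy hy0, hty.smul (inv_nonneg.2 (sum_nonneg fun j _ => hy j))⟩
    exact (this.not_gt hμt).elim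
  refine ⟨μ, x, fun i => (hx.1 i).lt_of_ne' fun hxi => ?_, heig⟩
  obtain ⟨j, hj⟩ : ∃ j, x j ≠ 0 := Function.ne_iff.1 (ne_zero_of_mem_stdSimplex hx)
  have hpos := (mul_pos (hA i fun _ => j)
    (by simpa using pow_pos ((hx.1 j).lt_of_ne' hj) m)).trans_le
      (mul_prod_le_tensorMap hA' hx.1 i fun _ => j)
  rw [heig i, hxi, zero_pow hm, mul_zero] at hpos
  exact lt_irrefl 0 hpos

lemma IsEigenpair.exists_one_le [Nonempty ι] (hx : ∀ i, 0 < x i) (h : IsEigenpair A μ x) :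
    ∃ y : ι → ℝ, (∀ i, 1 ≤ y i) ∧ (∃ j, y j = 1) ∧ IsEigenpair A μ y := by
  obtain ⟨j, -, hj⟩ := exists_min_image univ x univ_nonempty
  refine ⟨(x j)⁻¹ • x, fun i => ?_, ⟨j, inv_mul_cancel₀ (hx j).ne'⟩, h.smul _⟩
  rw [Pi.smul_apply, smul_eq_mul, ← div_eq_inv_mul, one_le_div (hx j)]
  exact hj i (mem_univ i)

lemma IsEigenpair.le_div_mul_pow (hA : ∀ i p, 0 ≤ A i p) (hx : ∀ j, 1 ≤ x j)
    (h : IsEigenpair A μ x) {a : ℝ} (ha : 0 < a) {i : ι} {p : Fin m → ι} (hp : a ≤ A i p)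
    (l : Fin m) : x (p l) ≤ μ / a * x i ^ m := by
  rw [div_mul_eq_mul_div, le_div_iff₀ ha, ← h i]
  calc x (p l) * a ≤ (∏ l, x (p l)) * A i p :=
        mul_le_mul (Multiset.mem_le_prod_of_one_le (fun l => hx (p l)) (mem_univ l)) hp ha.le
          (prod_nonneg fun _ _ => zero_le_one.trans (hx _))
    _ ≤ tensorMap A x i := by
        rw [mul_comm]
        exact mul_prod_le_tensorMap hA (fun j => zero_le_one.trans (hx j)) i p

lemma eq_univ_of_monotone_of_ssubset_succ {α : Type*} [Fintype α] {S : ℕ → Finset α}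
    (hmono : Monotone S) (hgrow : ∀ L, S L ≠ univ → S L ⊂ S (L + 1)) :
    S (Fintype.card α) = univ := by
  have key : ∀ L, S L = univ ∨ L ≤ #(S L) := by
    intro L
    induction L with
    | zero => exact Or.inr (Nat.zero_le _)
    | succ L ih =>
      by_cases hL : S L = univ
      · exact Or.inl (univ_subset_iff.1 (hL ▸ hmono L.le_succ))
      · exact Or.inr ((ih.resolve_left hL).trans_lt (card_lt_card (hgrow L hL)))
  exact (key _).elim id fun h => eq_univ_of_card _ (le_antisymm (card_le_univ _) h)

/-- The sets `{i | r i ≤ C ^ ((m + 1) ^ L)}` grow strictly with `L` until they exhaust `ι`. -/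
lemma WeaklyIrreducible.le_pow_of_le_mul_pow (hwi : WeaklyIrreducible A) {C : ℝ} (hC : 1 ≤ C)
    {r : ι → ℝ} (hr : ∀ i, 0 ≤ r i) {j : ι} (hj : r j ≤ 1)
    (hstep : ∀ i p l, 0 < A i p → r (p l) ≤ C * r i ^ m) (i : ι) :
    r i ≤ C ^ ((m + 1) ^ Fintype.card ι) := by
  set S : ℕ → Finset ι := fun L => univ.filter fun i => r i ≤ C ^ ((m + 1) ^ L)
  have hS : ∀ {L i}, i ∈ S L ↔ r i ≤ C ^ ((m + 1) ^ L) := by simp [S]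
  have hmono : Monotone S := fun L L' hLL' i hi =>
    hS.2 ((hS.1 hi).trans (pow_le_pow_right₀ hC (Nat.pow_le_pow_right m.succ_pos hLL')))
  have hjS : ∀ L, j ∈ S L := fun L => hS.2 (hj.trans (one_le_pow₀ hC))
  have hgrow : ∀ L, S L ≠ univ → S L ⊂ S (L + 1) := fun L hL => by
    obtain ⟨i, hi, p, hp, l, hl⟩ := hwi (S L) ⟨j, hjS L⟩ hL
    refine (ssubset_iff_of_subset (hmono L.le_succ)).2 ⟨p l, hS.2 ?_, hl⟩
    have hexp : 1 + (m + 1) ^ L * m ≤ (m + 1) ^ (L + 1) := by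
      rw [pow_succ, mul_add, mul_one, add_comm]
      exact Nat.add_le_add_left (Nat.one_le_pow _ _ m.succ_pos) _
    calc r (p l) ≤ C * r i ^ m := hstep i p l hp
      _ ≤ C * (C ^ ((m + 1) ^ L)) ^ m := by gcongr; exacts [hr i, hS.1 hi]
      _ = C ^ (1 + (m + 1) ^ L * m) := by rw [← pow_mul, pow_add, pow_one]
      _ ≤ C ^ ((m + 1) ^ (L + 1)) := pow_le_pow_right₀ hC hexp
  exact hS.1 (eq_univ_of_monotone_of_ssubset_succ hmono hgrow ▸ mem_univ i)

lemma exists_pos_forall_le_of_pos {α : Type*} [Finite α] (f : α → ℝ) :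
    ∃ a > 0, ∀ x, 0 < f x → a ≤ f x := by
  have hev : ∀ᶠ a in 𝓝 0, ∀ x, 0 < f x → a ≤ f x := eventually_all.2 fun x => by
    by_cases hx : 0 < f x
    · exact (eventually_le_nhds hx).mono fun a ha _ => ha
    · exact Eventually.of_forall fun a h => absurd h hx
  obtain ⟨a, ha, ha0⟩ := (hev.and_frequently (frequently_gt_nhds 0)).exists
  exact ⟨a, ha0, ha⟩

lemma IsEigenpair.le_pow_of_weaklyIrreducible (hwi : WeaklyIrreducible A)
    {A' : ι → (Fin m → ι) → ℝ} (hA' : ∀ i p, 0 ≤ A' i p) {a : ℝ} (ha : 0 < a)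
    (hle : ∀ i p, 0 < A i p → a ≤ A' i p) {B : ℝ} (hμB : μ ≤ B) (hx : ∀ i, 1 ≤ x i) {j : ι}
    (hj : x j = 1) (h : IsEigenpair A' μ x) (i : ι) :
    x i ≤ max 1 (B / a) ^ ((m + 1) ^ Fintype.card ι) := by
  have hx0 : ∀ i, 0 ≤ x i := fun i => zero_le_one.trans (hx i)
  refine hwi.le_pow_of_le_mul_pow (le_max_left _ _) hx0 hj.le (fun i p l hp => ?_) i
  calc x (p l) ≤ μ / a * x i ^ m := h.le_div_mul_pow hA' hx ha (hle i p hp) l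
    _ ≤ max 1 (B / a) * x i ^ m := by
        gcongr
        exacts [pow_nonneg (hx0 i) m,
          (div_le_div_of_nonneg_right hμB ha.le).trans (le_max_right _ _)]

lemma isClosed_setOf_isEigenpair :
    IsClosed {q : (ι → (Fin m → ι) → ℝ) × ℝ × (ι → ℝ) | IsEigenpair q.1 q.2.1 q.2.2} := by
  simp only [IsEigenpair, Set.ofPred_forall]
  exact isClosed_iInter fun i => isClosed_eq (by fun_prop) (by fun_prop)

theorem exists_pos_isEigenpair [Nonempty ι] (hm : m ≠ 0) (hA : ∀ i p, 0 ≤ A i p)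
    (hwi : WeaklyIrreducible A) : ∃ μ x, (∀ i, 0 < x i) ∧ IsEigenpair A μ x := by
  set Aₜ : ℕ → ι → (Fin m → ι) → ℝ := fun t i p => A i p + 1 / (t + 1)
  have hAₜ : ∀ t i p, A i p ≤ Aₜ t i p := fun t i p => le_add_of_nonneg_right (by positivity)
  have hAₜ_pos : ∀ t i p, 0 < Aₜ t i p := fun t i p =>
    add_pos_of_nonneg_of_pos (hA i p) (by positivity)
  have hAₜ_le : ∀ t i p, Aₜ t i p ≤ A i p + 1 := fun t i p => by
    dsimp only [Aₜ]
    gcongr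
    exact div_le_one_of_le₀ (le_add_of_nonneg_left t.cast_nonneg) (by positivity)
  have : ∀ t, ∃ μ x, (∀ i, 1 ≤ x i) ∧ (∃ j, x j = 1) ∧ IsEigenpair (Aₜ t) μ x := fun t => by
    obtain ⟨μ, x, hx, h⟩ := exists_pos_isEigenpair_of_pos hm (hAₜ_pos t)
    exact ⟨μ, h.exists_one_le hx⟩
  choose μ x hx hxj heig using this
  have hx0 : ∀ t i, 0 ≤ x t i := fun t i => zero_le_one.trans (hx t i)
  set B := ∑ i, ∑ p, (A i p + 1)
  have hμB : ∀ t, μ t ≤ B := fun t =>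
    ((heig t).isSubeigenpair.le_sum (fun i p => (hAₜ_pos t i p).le) (hx0 t)
      (fun h => (hx t (Classical.arbitrary ι)).not_gt (by simp [h]))).trans
      (sum_le_sum fun i _ => sum_le_sum fun p _ => hAₜ_le t i p)
  obtain ⟨a, ha, hle⟩ := exists_pos_forall_le_of_pos fun q : ι × (Fin m → ι) => A q.1 q.2
  set D := max 1 (B / a) ^ ((m + 1) ^ Fintype.card ι)
  have hxD : ∀ t i, x t i ≤ D := fun t =>
    (heig t).le_pow_of_weaklyIrreducible hwi (fun i p => (hAₜ_pos t i p).le) ha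
      (fun i p hp => (hle (i, p) hp).trans (hAₜ t i p)) (hμB t) (hx t) (hxj t).choose_spec
  obtain ⟨⟨μ₀, x₀⟩, hmem, φ, hφ, hlim⟩ :=
    (isCompact_Icc (a := ((0 : ℝ), fun _ : ι => (1 : ℝ)))
      (b := (B, fun _ => D))).tendsto_subseq
      (x := fun t => (μ t, x t))
      fun t => ⟨⟨(heig t).nonneg (fun i p => (hAₜ_pos t i p).le)
        (fun i => zero_lt_one.trans_le (hx t i)), hx t⟩, hμB t, hxD t⟩
  have hAlim : Tendsto (fun t => Aₜ (φ t)) atTop (𝓝 A) :=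
    tendsto_pi_nhds.2 fun i => tendsto_pi_nhds.2 fun p => by
      simpa [Aₜ] using (tendsto_const_nhds (x := A i p)).add
        (tendsto_one_div_add_atTop_nhds_zero_nat.comp hφ.tendsto_atTop)
  refine ⟨μ₀, x₀, fun i => zero_lt_one.trans_le (hmem.1.2 i), ?_⟩
  exact isClosed_setOf_isEigenpair.mem_of_tendsto (hAlim.prodMk_nhds hlim)
    (Eventually.of_forall fun t => heig (φ t))

lemma norm_mul_pow_le_tensorMap_norm (hA : ∀ i p, 0 ≤ A i p) {z : ι → ℂ} {lam : ℂ} {i : ι}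
    (h : ∑ p : Fin m → ι, (A i p : ℂ) * ∏ l, z (p l) = lam * z i ^ m) :
    ‖lam‖ * ‖z i‖ ^ m ≤ tensorMap A (fun j => ‖z j‖) i :=
  calc ‖lam‖ * ‖z i‖ ^ m = ‖∑ p : Fin m → ι, (A i p : ℂ) * ∏ l, z (p l)‖ := by
        rw [h, norm_mul, norm_pow]
    _ ≤ ∑ p : Fin m → ι, ‖(A i p : ℂ) * ∏ l, z (p l)‖ := norm_sum_le _ _
    _ = tensorMap A (fun j => ‖z j‖) i := sum_congr rfl fun p _ => by
        rw [norm_mul, norm_prod, Complex.norm_real, Real.norm_of_nonneg (hA i p)]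

end Tensor

lemma specRad_eq_of_isEigenpair {n k : ℕ} [Nonempty (Fin n)]
    {A : Fin n → (Fin (k - 1) → Fin n) → ℝ} (hA : ∀ i p, 0 ≤ A i p) {μ : ℝ} {x : Fin n → ℝ}
    (hx : ∀ i, 0 < x i) (h : IsEigenpair A μ x) :
    specRad n k (fun i p => (A i p : ℂ)) = μ := by
  obtain ⟨i₀⟩ := ‹Nonempty (Fin n)›
  refine IsGreatest.csSup_eq ⟨⟨μ, ⟨fun i => x i,
    fun h0 => (hx i₀).ne' (by simpa using congr_fun h0 i₀),
    fun i => by simpa [tensorMap] using congrArg Complex.ofReal (h i)⟩, ?_⟩, ?_⟩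
  · rw [Complex.norm_real, Real.norm_of_nonneg (h.nonneg hA hx)]
  · rintro _ ⟨lam, ⟨z, hz, hzeig⟩, rfl⟩
    refine IsSubeigenpair.le_of_isEigenpair hA hx h (fun j => norm_nonneg _) (fun h0 => hz ?_)
      fun i => norm_mul_pow_le_tensorMap_norm hA (hzeig i)
    exact funext fun j => norm_eq_zero.1 (congr_fun h0 j)

/-- Perron–Frobenius for nonnegative weakly irreducible tensors: the spectral
radius is an eigenvalue with a strictly positive eigenvector, and this is the
unique eigenvalue admitting a positive eigenvector, the eigenvector being unique
up to positive scaling. -/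
theorem perron_frobenius_tensor (n k : ℕ) (hn : 1 ≤ n) (hk : 2 ≤ k)
    (A : Fin n → (Fin (k - 1) → Fin n) → ℝ)
    (hnn : ∀ i p, 0 ≤ A i p)
    (hwi : ∀ I : Finset (Fin n), I.Nonempty → I ≠ Finset.univ →
      ∃ i ∈ I, ∃ p : Fin (k - 1) → Fin n, 0 < A i p ∧ ∃ m, p m ∉ I) :
    ∃ x : Fin n → ℝ, (∀ i, 0 < x i) ∧
      (∀ i, (∑ p : Fin (k - 1) → Fin n, A i p * ∏ m, x (p m))
        = specRad n k (fun i p => (A i p : ℂ)) * x i ^ (k - 1)) ∧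
      ∀ (y : Fin n → ℝ) (mu : ℝ), (∀ i, 0 < y i) →
        (∀ i, (∑ p : Fin (k - 1) → Fin n, A i p * ∏ m, y (p m))
          = mu * y i ^ (k - 1)) →
        mu = specRad n k (fun i p => (A i p : ℂ)) ∧ ∃ c : ℝ, 0 < c ∧ y = c • x := by
  have : Nonempty (Fin n) := ⟨⟨0, hn⟩⟩
  obtain ⟨μ, x, hx, hμx⟩ := exists_pos_isEigenpair (by omega) hnn hwi
  have hρ : specRad n k (fun i p => (A i p : ℂ)) = μ := specRad_eq_of_isEigenpair hnn hx hμx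
  refine ⟨x, hx, hρ ▸ hμx, fun y ν hy hνy => ?_⟩
  have hνμ : ν = μ := IsEigenpair.eigenvalue_eq hnn hx hμx hy hνy
  exact ⟨hνμ.trans hρ.symm, IsEigenpair.eq_smul hnn hwi hx hμx hy (hνμ ▸ hνy)⟩
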